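/- arXiv:2006.12510 — 4 statements merged into one kernel-verified Lean document; each statement's English description precedes it below -/
import Mathlib

section
/- Let ε > 0 and n = ⌈1/ε⌉. Define s₂(t) = (ε/2)·(t−1)^(2n) and s₁(t) = s₂(t) + t. Then s₁(α) > 0 for every real α. -/
theorem stmt_0 (ε : ℝ) (hε : 0 < ε) (n : ℕ) (hn : n = ⌈1/ε⌉₊)
    (s₂ s₁ : ℝ → ℝ)
    (hs₂ : ∀ t, s₂ t = ε/2 * (t - 1)^(2*n))
    (hs₁ : ∀ t, s₁ t = s₂ t + t) :
    ∀ α : ℝ, 0 < s₁ α := by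
  intro α
  rw [hs₁, hs₂]
  rcases lt_or_ge 0 α with h | h
  · have h1 : 0 ≤ ε/2 * (α - 1)^(2*n) :=
      mul_nonneg (by linarith) ((even_two_mul n).pow_nonneg _)
    linarith
  · -- α ≤ 0
    have hεn : 1 ≤ ε * n := by
      have := Nat.le_ceil (1/ε)
      rw [← hn] at this
      have := (div_le_iff₀ hε).mp this
      linarith [mul_comm ε (n:ℝ)]
    set a : ℝ := -α with ha
    have ha0 : 0 ≤ a := by simp [ha]; linarith
    have hpow : (α - 1)^(2*n) = (1 + a)^(2*n) := by
      have : α - 1 = -(1 + a) := by simp [ha]; ring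
      rw [this]
      rw [neg_pow]
      simp [pow_mul]
    have hbern : 1 + (2*n : ℝ) * a ≤ (1 + a)^(2*n) := by
      have := one_add_mul_le_pow (a := a) (by linarith) (2*n)
      simpa [mul_comm] using this
    have hnn : (1:ℕ) ≤ ⌈1/ε⌉₊ := Nat.one_le_ceil_iff.mpr (by positivity)
    have : ε/2 * (1 + (2*n : ℝ) * a) ≥ ε/2 + a := by
      have : ε * ((n:ℝ) * a) ≥ 1 * a := by
        apply mul_le_mul_of_nonneg_right hεn ha0 |>.trans_eq
        ring
      nlinarith
    have hle : ε/2 + a ≤ ε/2 * (1 + a)^(2*n) := by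
      calc ε/2 + a ≤ ε/2 * (1 + (2*n:ℝ) * a) := this
        _ ≤ ε/2 * (1 + a)^(2*n) := by
            apply mul_le_mul_of_nonneg_left hbern (by linarith)
    have hfin : 0 < ε/2 + a + α := by simp [ha]; linarith
    rw [hpow]
    linarith
end

section
/- Every univariate real polynomial that is strictly positive on all of ℝ is a sum of two squares of real polynomials. -/
/-!
Induct on the degree. A real polynomial without real roots but of positive degree has a
non-real complex root `a + b i`, so it is divisible by `(X - a)² + b²`; the cofactor is again
positive on `ℝ`, hence a sum of two squares by induction, and the product of two sums of two
squares is one again (Brahmagupta–Fibonacci).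
-/

open Polynomial

namespace Polynomial

lemma exists_sq_add_C_sq_dvd_of_forall_not_isRoot {p : ℝ[X]} (hdeg : 0 < p.degree)
    (hroot : ∀ x : ℝ, ¬ p.IsRoot x) :
    ∃ a b : ℝ, b ≠ 0 ∧ (X - C a) ^ 2 + C b ^ 2 ∣ p := by
  obtain ⟨z, hz⟩ : ∃ z : ℂ, aeval z p = 0 := IsAlgClosed.exists_aeval_eq_zero _ p hdeg.ne'
  have him : z.im ≠ 0 := by
    intro him
    have hre : z = (z.re : ℂ) := Complex.ext rfl (by simp [him])
    rw [hre, ← Complex.coe_algebraMap, aeval_algebraMap_apply, map_eq_zero] at hz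
    exact hroot z.re hz
  refine ⟨z.re, z.im, him, ?_⟩
  convert p.quadratic_dvd_of_aeval_eq_zero_im_ne_zero hz him using 1
  rw [Complex.sq_norm, Complex.normSq_apply]
  simp only [C_add, C_mul, map_ofNat]
  ring

section

variable {R : Type*} [CommRing R]

lemma natDegree_sub_C_sq_add_C_sq [Nontrivial R] (a b : R) :
    ((X - C a) ^ 2 + C b ^ 2).natDegree = 2 := by
  compute_degree!

lemma eval_sub_C_sq_add_C_sq_pos [LinearOrder R] [IsStrictOrderedRing R] {b : R} (hb : b ≠ 0)
    (a x : R) : 0 < ((X - C a) ^ 2 + C b ^ 2).eval x := by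
  simp only [eval_add, eval_pow, eval_sub, eval_X, eval_C]
  positivity

end

end Polynomial

theorem stmt_4 (p : Polynomial ℝ) (hp : ∀ α : ℝ, 0 < p.eval α) :
    ∃ q r : Polynomial ℝ, p = q^2 + r^2 := by
  induction hn : p.natDegree using Nat.strong_induction_on generalizing p with
  | _ n ih =>
  have hp0 : p ≠ 0 := fun h => by simpa [h] using hp 0
  rcases Nat.eq_zero_or_pos n with rfl | hnpos
  · rw [eq_C_of_natDegree_eq_zero hn] at hp ⊢
    refine ⟨C √(p.coeff 0), 0, ?_⟩
    rw [← C_pow, Real.sq_sqrt (by simpa using (hp 0).le)]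
    ring
  obtain ⟨a, b, hb, p', rfl⟩ := exists_sq_add_C_sq_dvd_of_forall_not_isRoot
    (by rw [degree_eq_natDegree hp0]; exact_mod_cast hn ▸ hnpos) (fun x => (hp x).ne')
  have hp' : ∀ x : ℝ, 0 < p'.eval x := fun x =>
    pos_of_mul_pos_right (by simpa only [eval_mul] using hp x)
      (eval_sub_C_sq_add_C_sq_pos hb a x).le
  have hdeg : p'.natDegree < n := by
    rw [← hn, natDegree_mul (fun h => by simpa [h] using eval_sub_C_sq_add_C_sq_pos hb a 0)
      (fun h => by simpa [h] using hp' 0), natDegree_sub_C_sq_add_C_sq]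
    omega
  obtain ⟨q, r, rfl⟩ := ih _ hdeg p' hp' rfl
  exact ⟨_, _, sq_add_sq_mul_sq_add_sq⟩
end

section
/- Let X be a real symmetric k×k matrix such that tr(X·p(X)²) ≥ 0 for every univariate real polynomial p. Then X is positive semidefinite. -/
/-!
Diagonalising `X = U D Uᵀ` turns `tr (X p(X)²)` into `∑ λⱼ p(λⱼ)²` over the eigenvalues. If some
eigenvalue `λ` were negative, the polynomial `p = ∏ (t - μ)` over the other distinct eigenvalues `μ`
kills every term except those with `λⱼ = λ`, each equal to `λ p(λ)² < 0`.
-/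

open Matrix Polynomial

namespace Matrix.IsHermitian

variable {n 𝕜 : Type*} [RCLike 𝕜] [Fintype n] [DecidableEq n] {A : Matrix n n 𝕜}

lemma trace_cfc (hA : A.IsHermitian) (f : ℝ → ℝ) :
    (cfc f A).trace = ∑ i, (f (hA.eigenvalues i) : 𝕜) := by
  rw [hA.cfc_eq, IsHermitian.cfc, Unitary.conjStarAlgAut_apply, trace_mul_cycle,
    Unitary.star_mul_self_of_mem hA.eigenvectorUnitary.prop, one_mul, trace_diagonal]
  rfl

lemma trace_aeval (hA : A.IsHermitian) (q : ℝ[X]) :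
    (aeval A q).trace = ∑ i, ((q.eval (hA.eigenvalues i) : ℝ) : 𝕜) := by
  rw [← cfc_polynomial q A hA.isSelfAdjoint, hA.trace_cfc]

end Matrix.IsHermitian

theorem nonneg_of_forall_sum_mul_eval_sq_nonneg {ι : Type*} [Fintype ι] (d : ι → ℝ)
    (h : ∀ p : ℝ[X], 0 ≤ ∑ j, d j * p.eval (d j) ^ 2) (i : ι) : 0 ≤ d i := by
  classical
  by_contra! hi
  let S := (Finset.univ.image d).erase (d i)
  have heval : ∀ x, (∏ v ∈ S, (X - C v)).eval x = 0 ↔ x ∈ S := by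
    simp [eval_prod, Finset.prod_eq_zero_iff, sub_eq_zero]
  refine (h (∏ v ∈ S, (X - C v))).not_gt (Finset.sum_neg' (fun j _ => ?_) ⟨i, by simp, ?_⟩)
  · by_cases hj : d j = d i
    · rw [hj]
      exact mul_nonpos_of_nonpos_of_nonneg hi.le (sq_nonneg _)
    · rw [(heval _).2 (by simp [S, hj])]
      simp
  · exact mul_neg_of_neg_of_pos hi (pow_two_pos_of_ne_zero ((heval _).not.2 (by simp [S])))

theorem stmt_11 (k : ℕ) (X : Matrix (Fin k) (Fin k) ℝ) (hX : X.IsSymm)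
    (h : ∀ p : Polynomial ℝ, 0 ≤ (X * (Polynomial.aeval X p)^2).trace) :
    X.PosSemidef := by
  have hH : X.IsHermitian := by
    rwa [Matrix.IsHermitian, Matrix.conjTranspose_eq_transpose_of_trivial]
  refine hH.posSemidef_iff_eigenvalues_nonneg.mpr
    (nonneg_of_forall_sum_mul_eval_sq_nonneg _ fun p => ?_)
  have hq : aeval X (Polynomial.X * p ^ 2) = X * aeval X p ^ 2 := by simp
  have htrace := h p
  rw [← hq, hH.trace_aeval] at htrace
  simpa using htrace
end

section
/- Suppose s₁, s₂ ∈ ℝ[t] satisfy s₁ − s₂ = t and let A be a real symmetric matrix. If s₁ is a sum of squares of polynomials and tr(s₂(A)) ≤ ε for all ε > 0 (i.e., tr(s₂(A)) ≤ 0), and s₂ is a sum of squares, then A is positive semidefinite. -/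
open Matrix Polynomial

theorem IsSelfAdjoint.aeval {R A : Type*} [CommSemiring R] [StarRing R] [TrivialStar R]
    [Semiring A] [StarRing A] [Algebra R A] [StarModule R A] {a : A} (ha : IsSelfAdjoint a)
    (p : R[X]) : IsSelfAdjoint (aeval a p) := by
  induction p using Polynomial.induction_on' with
  | add p q hp hq => simpa only [map_add] using hp.add hq
  | monomial n c =>
    rw [aeval_monomial, ← Algebra.smul_def]
    exact (IsSelfAdjoint.all c).smul (ha.pow n)

namespace Matrix

variable {n : Type*} [Fintype n] [DecidableEq n]

theorem IsHermitian.posSemidef_sq {R : Type*} [Ring R] [PartialOrder R] [StarRing R]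
    [StarOrderedRing R] {B : Matrix n n R} (hB : B.IsHermitian) : (B ^ 2).PosSemidef := by
  simpa only [sq, hB.eq] using posSemidef_conjTranspose_mul_self B

open scoped ComplexOrder in
theorem IsHermitian.posSemidef_aeval_sum_sq {𝕜 : Type*} [RCLike 𝕜] {A : Matrix n n 𝕜} (hA : A.IsHermitian)
    {ι : Type*} (s : Finset ι) (q : ι → ℝ[X]) : (aeval A (∑ i ∈ s, q i ^ 2)).PosSemidef := by
  simp only [map_sum, map_pow]
  exact posSemidef_sum s fun i _ => IsHermitian.posSemidef_sq (IsSelfAdjoint.aeval hA (q i))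

end Matrix

theorem stmt_19 (k : ℕ) (A : Matrix (Fin k) (Fin k) ℝ) (hA : A.IsSymm)
    (s₁ s₂ : Polynomial ℝ) (hdiff : s₁ - s₂ = X)
    (hs₁ : ∃ (n : ℕ) (q : Fin n → Polynomial ℝ), s₁ = ∑ i, (q i)^2)
    (hs₂ : ∃ (n : ℕ) (q : Fin n → Polynomial ℝ), s₂ = ∑ i, (q i)^2)
    (htr : (Polynomial.aeval A s₂).trace ≤ 0) :
    A.PosSemidef := by
  have hA' : A.IsHermitian := isHermitian_iff_isSymm.mpr hA
  obtain ⟨n₁, q₁, rfl⟩ := hs₁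
  obtain ⟨n₂, q₂, rfl⟩ := hs₂
  have hs₂_psd := hA'.posSemidef_aeval_sum_sq Finset.univ q₂
  have hs₂_zero : aeval A (∑ i, q₂ i ^ 2) = 0 :=
    hs₂_psd.trace_eq_zero_iff.mp (le_antisymm htr hs₂_psd.trace_nonneg)
  have hA_eq : A = aeval A (∑ i, q₁ i ^ 2) := by
    rw [← sub_zero (aeval A _), ← hs₂_zero, ← map_sub, hdiff, aeval_X]
  rw [hA_eq]
  exact hA'.posSemidef_aeval_sum_sq Finset.univ q₁
end
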